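/- arXiv:1903.11380 — 4 statements merged into one kernel-verified Lean document; each statement's English description precedes it below -/
import Mathlib

section
/- For vectors v, w in Z_2^α × R^β, if the inner product [v, w] = u·Σᵢ aᵢdᵢ + Σⱼ xⱼyⱼ equals 0 in R, then the binary Gray images satisfy [Φ(v), Φ(w)] = 0 in Z_2 (with the standard dot product). -/
open TrivSqZeroExt DualNumber Finset

/-- `Z2` is the binary field `ℤ/2ℤ`. -/
abbrev Z2 : Type := ZMod 2

/-- `Ru` is the ring `R = ℤ₂ + uℤ₂ = ℤ₂[u]/(u²)`, realized as dual numbers over `ℤ/2ℤ`,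
with `u = ε`. -/
abbrev Ru : Type := DualNumber Z2

/-- The `R`-module structure on `ℤ₂` induced by `θ = fst : R → ℤ₂`, i.e. `r • a = θ(r)a`. -/
noncomputable instance moduleRuZ2 : Module Ru Z2 :=
  Module.compHom Z2 (fstHom Z2 Z2 Z2).toRingHom

/-- The mixed ambient space `ℤ₂^α × R^β`. -/
abbrev V (α β : ℕ) : Type := (Fin α → Z2) × (Fin β → Ru)

/-- The inner product `[v,w] = u·Σ aᵢdᵢ + Σ xⱼyⱼ ∈ R` on `ℤ₂^α × R^β`. -/
def inn {α β : ℕ} (v w : V α β) : Ru :=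
  eps * inl (∑ i, v.1 i * w.1 i) + ∑ j, v.2 j * w.2 j

/-- The Gray map `Φ(a, s+ut) = (a, t, s+t)`, with codomain `ℤ₂^α × ℤ₂^β × ℤ₂^β ≅ ℤ₂^(α+2β)`. -/
def gray {α β : ℕ} (v : V α β) : (Fin α → Z2) × (Fin β → Z2) × (Fin β → Z2) :=
  (v.1, fun j => snd (v.2 j), fun j => fst (v.2 j) + snd (v.2 j))


/-- The standard binary dot product on `ℤ₂^α × ℤ₂^β × ℤ₂^β ≅ ℤ₂^(α+2β)`. -/
def bdot {α β : ℕ} (x y : (Fin α → Z2) × (Fin β → Z2) × (Fin β → Z2)) : Z2 :=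
  ∑ i, x.1 i * y.1 i + ∑ j, x.2.1 j * y.2.1 j + ∑ j, x.2.2 j * y.2.2 j

/-- The right side is the dot product of the Gray images `(t, s + t)`, `(t', s' + t')` of
`s + εt`, `s' + εt'`; its two `tt'` terms cancel in characteristic two. -/
theorem DualNumber.fst_mul_add_snd_mul {R : Type*} [CommRing R] [CharP R 2] (x y : R[ε]) :
    fst (x * y) + snd (x * y) = snd x * snd y + (fst x + snd x) * (fst y + snd y) := by
  rw [fst_mul, DualNumber.snd_mul]
  linear_combination (-(snd x * snd y)) * CharTwo.two_eq_zero (R := R)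

theorem fst_inn {α β : ℕ} (v w : V α β) : fst (inn v w) = ∑ j, fst (v.2 j * w.2 j) := by
  simp [inn, fst_sum]

theorem snd_inn {α β : ℕ} (v w : V α β) :
    snd (inn v w) = ∑ i, v.1 i * w.1 i + ∑ j, snd (v.2 j * w.2 j) := by
  simp [inn, snd_sum]

theorem bdot_gray_eq_fst_add_snd_inn {α β : ℕ} (v w : V α β) :
    bdot (gray v) (gray w) = fst (inn v w) + snd (inn v w) := by
  rw [fst_inn, snd_inn, add_left_comm, ← sum_add_distrib]
  simp only [DualNumber.fst_mul_add_snd_mul, sum_add_distrib, bdot, gray, add_assoc]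

/-- If `[v, w] = 0` in `R`, then the Gray images satisfy `[Φ(v), Φ(w)] = 0` in `ℤ₂`. -/
theorem stmt_6 (α β : ℕ) (v w : V α β) (h : inn v w = 0) :
    bdot (gray v) (gray w) = 0 := by
  rw [bdot_gray_eq_fst_add_snd_inn, h, fst_zero, snd_zero, add_zero]
end

section
/- Let C ≠ {0} be a Z_2Z_2[u]-linear code generated by rows c₁, ..., c_k, and let G be the k×k Gram matrix over R with entries Gᵢⱼ = [cᵢ, cⱼ]. If the Gram matrix GG^T is invertible over R, then C is LCD, i.e., C ∩ C^⊥ = {0}. -/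
/-! Write `v = ∑ lᵢ cᵢ`. Orthogonality of `v` to each generator `cⱼ` says exactly that the row
vector `l` is annihilated by the Gram matrix, `l G = 0`; if `G` is invertible then `l = 0`, so
`v = 0`. Only the bilinearity of `[·,·]` over `R` enters. -/

open TrivSqZeroExt DualNumber Finset

namespace LinearMap.BilinForm

variable {R M ι : Type*} [CommSemiring R] [AddCommMonoid M] [Module R M] [Fintype ι]

theorem vecMul_gram (B : LinearMap.BilinForm R M) (c : ι → M) (l : ι → R) :
    Matrix.vecMul l (Matrix.of fun i j => B (c i) (c j)) = fun j => B (∑ i, l i • c i) (c j) := by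
  ext j
  simp [Matrix.vecMul, dotProduct, map_sum]

theorem eq_zero_of_mem_span_of_isUnit_gram [DecidableEq ι] (B : LinearMap.BilinForm R M)
    (c : ι → M)
    (hG : IsUnit (Matrix.of fun i j => B (c i) (c j))) {v : M}
    (hv : v ∈ Submodule.span R (Set.range c)) (horth : ∀ j, B v (c j) = 0) : v = 0 := by
  obtain ⟨l, rfl⟩ := (Submodule.mem_span_range_iff_exists_fun R).mp hv
  have hl : l = 0 := Matrix.vecMul_injective_of_isUnit hG <| by
    change Matrix.vecMul l _ = Matrix.vecMul 0 _
    rw [vecMul_gram, Matrix.zero_vecMul]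
    exact funext horth
  simp [hl]

end LinearMap.BilinForm

section InnerProduct

variable {α β : ℕ}

theorem inn_comm (v w : V α β) : inn v w = inn w v := by
  simp only [inn, mul_comm (v.1 _), mul_comm (v.2 _)]

theorem inn_add_left (a b w : V α β) : inn (a + b) w = inn a w + inn b w := by
  simp only [inn, Prod.fst_add, Prod.snd_add, Pi.add_apply, add_mul, sum_add_distrib, inl_add]
  ring

theorem inn_smul_left (r : Ru) (a w : V α β) : inn (r • a) w = r * inn a w := by
  have hfst : ∀ i, (r • a).1 i = r.fst * a.1 i := fun _ => rfl
  have hsnd : ∀ j, (r • a).2 j = r * a.2 j := fun _ => rfl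
  -- `R` acts on `ℤ₂` through `fst`, and `u` does not see the `u`-part of `r`.
  have heps : eps * r = eps * (inl r.fst : Ru) := by ext <;> simp
  simp only [inn, hfst, hsnd, mul_assoc, ← mul_sum, ← inl_mul_inl, mul_add]
  rw [← mul_assoc, ← heps]
  ring

noncomputable def innBilin : LinearMap.BilinForm Ru (V α β) :=
  LinearMap.mk₂ Ru inn inn_add_left inn_smul_left
    (fun v a b => by rw [inn_comm, inn_add_left, inn_comm a, inn_comm b])
    (fun r v w => by rw [inn_comm, inn_smul_left, inn_comm, smul_eq_mul])

end InnerProduct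

theorem stmt_14_general (α β k : ℕ) (c : Fin k → V α β)
    (hG : IsUnit (Matrix.of fun i j : Fin k => inn (c i) (c j))) :
    ∀ v ∈ Submodule.span Ru (Set.range c),
      (∀ w ∈ Submodule.span Ru (Set.range c), inn v w = 0) → v = 0 :=
  fun _ hv hperp => LinearMap.BilinForm.eq_zero_of_mem_span_of_isUnit_gram innBilin c hG hv
    fun j => hperp _ (Submodule.subset_span ⟨j, rfl⟩)

/-- If the Gram matrix `GG^T` (entries `[cᵢ, cⱼ]`) of a generator matrix of a nonzero
`ℤ₂ℤ₂[u]`-linear code `C` is invertible over `R`, then `C` is LCD: `C ∩ C^⊥ = {0}`. -/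
theorem stmt_14 (α β k : ℕ) (c : Fin k → V α β)
    (hC : Submodule.span Ru (Set.range c) ≠ ⊥)
    (hG : IsUnit (Matrix.of fun i j : Fin k => inn (c i) (c j))) :
    ∀ v ∈ Submodule.span Ru (Set.range c),
      (∀ w ∈ Submodule.span Ru (Set.range c), inn v w = 0) → v = 0 :=
  stmt_14_general α β k c hG
end

section
/- If C₁ and C₂ are Z_2Z_2[u]-linear codes with generator matrices G₁, G₂ whose Gram matrices G₁G₁^T and G₂G₂^T are invertible over R, then the code generated by the Kronecker product G₁ ⊗ G₂ is a Z_2Z_2[u]-LCD code. -/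
open TrivSqZeroExt DualNumber Finset

open Matrix

open Kronecker in
theorem Matrix.kronecker_mul_transpose_kronecker {R l m n p : Type*} [CommSemiring R]
    [Fintype m] [Fintype p] (A : Matrix l m R) (B : Matrix n p R) :
    (A ⊗ₖ B) * (A ⊗ₖ B)ᵀ = (A * Aᵀ) ⊗ₖ (B * Bᵀ) := by
  rw [← kroneckerMap_transpose, mul_kronecker_mul]

theorem Matrix.eq_zero_of_mem_span_rows_of_forall_dotProduct_row_eq_zero {R m n : Type*}
    [CommRing R] [Fintype m] [DecidableEq m] [Fintype n] {G : Matrix m n R}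
    (hG : IsUnit (G * Gᵀ)) {v : n → R} (hv : v ∈ Submodule.span R (Set.range G))
    (horth : ∀ i, v ⬝ᵥ G i = 0) : v = 0 := by
  change v ∈ Submodule.span R (Set.range G.row) at hv
  rw [← range_vecMulLinear] at hv
  obtain ⟨c, rfl⟩ := hv
  have hGram : (G * Gᵀ) *ᵥ c = 0 := by
    ext i
    rw [← mulVec_mulVec, mulVec_transpose, mulVec, dotProduct_comm]
    exact horth i
  have hc : c = 0 := mulVec_injective_of_isUnit hG (hGram.trans (mulVec_zero _).symm)
  rw [vecMulLinear_apply, hc, zero_vecMul]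

open Kronecker in
/-- If the Gram matrices `G₁G₁^T` and `G₂G₂^T` of generator matrices `G₁, G₂` over `R`
are invertible, then the code generated by the rows of the Kronecker product `G₁ ⊗ G₂`
is an LCD code. -/
theorem stmt_16 (k₁ n₁ k₂ n₂ : ℕ)
    (G₁ : Matrix (Fin k₁) (Fin n₁) Ru) (G₂ : Matrix (Fin k₂) (Fin n₂) Ru)
    (h₁ : IsUnit (G₁ * G₁.transpose)) (h₂ : IsUnit (G₂ * G₂.transpose)) :
    ∀ v ∈ Submodule.span Ru (Set.range fun p : Fin k₁ × Fin k₂ => (G₁ ⊗ₖ G₂) p),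
      (∀ w ∈ Submodule.span Ru (Set.range fun p : Fin k₁ × Fin k₂ => (G₁ ⊗ₖ G₂) p),
          ∑ q : Fin n₁ × Fin n₂, v q * w q = 0) → v = 0 := by
  intro v hv hw
  have hGram : IsUnit ((G₁ ⊗ₖ G₂) * (G₁ ⊗ₖ G₂)ᵀ) := by
    rw [kronecker_mul_transpose_kronecker]
    exact h₁.kronecker h₂
  exact eq_zero_of_mem_span_rows_of_forall_dotProduct_row_eq_zero hGram hv
    fun p => hw _ (Submodule.subset_span ⟨p, rfl⟩)
end

section
/- If C = C_α × C_β is a product of a binary linear code C_α ⊆ Z_2^α and an R-linear code C_β ⊆ R^β, then C is a Z_2Z_2[u]-LCD code if and only if C_α is a binary LCD code and C_β is an R-LCD code. -/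
open TrivSqZeroExt DualNumber Finset

theorem DualNumber.eps_mul_inl {R : Type*} [Semiring R] (s : R) :
    (ε * inl s : R[ε]) = inr s := by
  ext <;> simp

theorem DualNumber.eps_mul_inl_eq_zero_iff {R : Type*} [Semiring R] (s : R) :
    (ε * inl s : R[ε]) = 0 ↔ s = 0 := by
  rw [eps_mul_inl, ← inr_zero, inr_injective.eq_iff]

def IsLCD {M R : Type*} [Zero M] [Zero R] (C : Set M) (B : M → M → R) : Prop :=
  ∀ v ∈ C, (∀ w ∈ C, B v w = 0) → v = 0

section Product

variable {α β : ℕ} {Ca : Set (Fin α → Z2)} {Cb : Set (Fin β → Ru)}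

theorem inn_mk (a d : Fin α → Z2) (x y : Fin β → Ru) :
    inn ((a, x) : V α β) (d, y) = ε * inl (a ⬝ᵥ d) + x ⬝ᵥ y :=
  rfl

theorem isLCD_left_of_isLCD_prod (hb0 : 0 ∈ Cb) (h : IsLCD (Ca ×ˢ Cb) inn) :
    IsLCD Ca dotProduct := by
  intro a ha horth
  have hv : ((a, 0) : V α β) ∈ Ca ×ˢ Cb := ⟨ha, hb0⟩
  refine congrArg Prod.fst (h _ hv fun w hw => ?_)
  rw [← Prod.mk.eta (p := w), inn_mk, horth _ hw.1]
  simp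

theorem isLCD_right_of_isLCD_prod (ha0 : 0 ∈ Ca) (h : IsLCD (Ca ×ˢ Cb) inn) :
    IsLCD Cb dotProduct := by
  intro x hx horth
  have hv : ((0, x) : V α β) ∈ Ca ×ˢ Cb := ⟨ha0, hx⟩
  refine congrArg Prod.snd (h _ hv fun w hw => ?_)
  rw [← Prod.mk.eta (p := w), inn_mk, horth _ hw.2]
  simp

theorem isLCD_prod (ha0 : 0 ∈ Ca) (hb0 : 0 ∈ Cb) (ha : IsLCD Ca dotProduct)
    (hb : IsLCD Cb dotProduct) : IsLCD (Ca ×ˢ Cb) inn := by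
  rintro ⟨a, x⟩ ⟨hav, hxv⟩ horth
  have ha_zero : a = 0 := ha a hav fun d hd => by
    simpa [inn_mk, eps_mul_inl_eq_zero_iff] using horth (d, 0) ⟨hd, hb0⟩
  have hx_zero : x = 0 := hb x hxv fun y hy => by
    simpa [inn_mk] using horth (0, y) ⟨ha0, hy⟩
  rw [ha_zero, hx_zero, Prod.mk_zero_zero]

theorem isLCD_prod_iff (ha0 : 0 ∈ Ca) (hb0 : 0 ∈ Cb) :
    IsLCD (Ca ×ˢ Cb) inn ↔ IsLCD Ca dotProduct ∧ IsLCD Cb dotProduct :=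
  ⟨fun h => ⟨isLCD_left_of_isLCD_prod hb0 h, isLCD_right_of_isLCD_prod ha0 h⟩,
    fun ⟨ha, hb⟩ => isLCD_prod ha0 hb0 ha hb⟩

end Product

/-- For a product code `C = C_α × C_β`, `C` is `ℤ₂ℤ₂[u]`-LCD iff `C_α` is a binary
LCD code and `C_β` is an `R`-LCD code. -/
theorem stmt_18 (α β : ℕ) (Ca : Submodule Z2 (Fin α → Z2)) (Cb : Submodule Ru (Fin β → Ru))
    (C : Submodule Ru (V α β))
    (hC : (C : Set (V α β)) = (Ca : Set (Fin α → Z2)) ×ˢ (Cb : Set (Fin β → Ru))) :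
    (∀ v ∈ C, (∀ w ∈ C, inn v w = 0) → v = 0) ↔
      ((∀ a ∈ Ca, (∀ d ∈ Ca, ∑ i, a i * d i = 0) → a = 0) ∧
       (∀ x ∈ Cb, (∀ y ∈ Cb, ∑ j, x j * y j = (0 : Ru)) → x = 0)) := by
  have key := isLCD_prod_iff (Ca := (Ca : Set (Fin α → Z2))) (Cb := (Cb : Set (Fin β → Ru)))
    Ca.zero_mem Cb.zero_mem
  rw [← hC] at key
  exact key
end
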